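/- For odd n ≥ 5, no 2-element subset of the vertices of the cycle C_n is a local multiset resolving set; hence lmd(C_n) ≥ 3 (and C_5 has no local multiset resolving set at all, while lmd(C_n) = 3 for odd n ≥ 7). -/

import Mathlib

open SimpleGraph Finset

/-- The representation multiset of `u` with respect to `W`: the multiset of distances
from `u` to the vertices of `W`. -/
noncomputable def mrep {V : Type*} (G : SimpleGraph V) (u : V) (W : Finset V) : Multiset ℕ :=
  W.val.map fun w => G.dist u w

/-- `W` is a local multiset resolving set: adjacent vertices have distinct
representation multisets. -/
def IsLocalMultisetResolving {V : Type*} (G : SimpleGraph V) (W : Finset V) : Prop :=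
  ∀ u v : V, G.Adj u v → mrep G u W ≠ mrep G v W

namespace StmtAux

open Fin.NatCast Fin.CommRing

variable {n : ℕ}

lemma mod_cases' (x n : ℕ) (h : x < 2 * n) : x % n = x ∨ x % n + n = x := by
  rcases Nat.lt_or_ge x n with h1 | h1
  · left; exact Nat.mod_eq_of_lt h1
  · right
    rcases Nat.eq_zero_or_pos n with rfl | h0
    · omega
    rw [Nat.mod_eq_sub_mod h1, Nat.mod_eq_of_lt (by omega)]
    omega

lemma fin_add_val (x y : Fin n) : (x + y).val = x.val + y.val ∨ (x + y).val + n = x.val + y.val := by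
  have hx := x.isLt
  have hy := y.isLt
  rw [Fin.add_def]
  exact mod_cases' _ _ (by omega)

lemma fin_sub_val (x y : Fin n) : (x - y).val + y.val = x.val ∨ (x - y).val + y.val = x.val + n := by
  have hx := x.isLt
  have hy := y.isLt
  have e : (x - y).val = (n - y.val + x.val) % n := rfl
  have := mod_cases' (n - y.val + x.val) n (by omega)
  omega

lemma fin_sub_self (x : Fin n) : (x - x).val = 0 := by
  have := fin_sub_val x x
  have := (x - x).isLt
  have := x.isLt
  omega

section NZ
variable [NeZero n]

lemma one_val (hn : 2 ≤ n) : (1 : Fin n).val = 1 := by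
  rw [Fin.val_one']
  exact Nat.mod_eq_of_lt (by omega)

lemma dist_le_walk_right (hn : 2 ≤ n) (u : Fin n) (k : ℕ) :
    (cycleGraph n).dist u (u + (k : Fin n)) ≤ k := by
  induction k with
  | zero => simp
  | succ k ih =>
    have hconn : (cycleGraph n).Connected := by
      obtain ⟨m, rfl⟩ : ∃ m, n = m + 1 := ⟨n - 1, by omega⟩
      exact cycleGraph_connected
    have hadj : (cycleGraph n).Adj (u + (k : Fin n)) (u + (k : Fin n) + 1) := by
      rw [cycleGraph_adj']
      right
      rw [add_sub_cancel_left]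
      exact one_val hn
    have hcast : ((k + 1 : ℕ) : Fin n) = (k : Fin n) + 1 := by push_cast; ring
    calc (cycleGraph n).dist u (u + ((k + 1 : ℕ) : Fin n))
        = (cycleGraph n).dist u (u + (k : Fin n) + 1) := by rw [hcast, add_assoc]
      _ ≤ (cycleGraph n).dist u (u + (k : Fin n))
            + (cycleGraph n).dist (u + (k : Fin n)) (u + (k : Fin n) + 1) :=
          hconn.dist_triangle
      _ ≤ k + 1 := by
          have := (SimpleGraph.dist_eq_one_iff_adj.mpr hadj).le
          omega

lemma dist_le_sub (hn : 2 ≤ n) (u v : Fin n) : (cycleGraph n).dist u v ≤ (v - u).val := by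
  have h := dist_le_walk_right hn u ((v - u).val)
  simpa [Fin.cast_val_eq_self] using h

end NZ

lemma walk_length_ge (hn : 2 ≤ n) {u v : Fin n} (p : (cycleGraph n).Walk u v) :
    min (v - u).val (u - v).val ≤ p.length := by
  induction p with
  | nil => simp [fin_sub_self]
  | @cons u b v h p ih =>
    rw [cycleGraph_adj'] at h
    have h3 := fin_sub_val v b
    have h4 := fin_sub_val b v
    have h1 := fin_sub_val v u
    have h2 := fin_sub_val u v
    have h5 := fin_sub_val u b
    have h6 := fin_sub_val b u
    have i1 := (v - u).isLt
    have i2 := (u - v).isLt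
    have i3 := (v - b).isLt
    have i4 := (b - v).isLt
    have i5 := u.isLt
    have i6 := v.isLt
    have i7 := b.isLt
    simp only [SimpleGraph.Walk.length_cons]
    omega

lemma cycle_dist (hn : 2 ≤ n) (u v : Fin n) :
    (cycleGraph n).dist u v = min (v - u).val (u - v).val := by
  have : NeZero n := ⟨by omega⟩
  apply le_antisymm
  · exact le_min (dist_le_sub hn u v) (by rw [SimpleGraph.dist_comm]; exact dist_le_sub hn v u)
  · have hconn : (cycleGraph n).Connected := by
      obtain ⟨m, rfl⟩ : ∃ m, n = m + 1 := ⟨n - 1, by omega⟩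
      exact cycleGraph_connected
    obtain ⟨p, hp⟩ := (hconn.preconnected u v).exists_walk_length_eq_dist
    rw [← hp]
    exact walk_length_ge hn p

section NZ2
variable [NeZero n]

lemma dist_reflect (hn : 2 ≤ n) (s x y : Fin n) :
    (cycleGraph n).dist (s - x) (s - y) = (cycleGraph n).dist x y := by
  rw [cycle_dist hn, cycle_dist hn]
  have e1 : s - y - (s - x) = x - y := by ring
  have e2 : s - x - (s - y) = y - x := by ring
  rw [e1, e2, Nat.min_comm]

lemma dist_translate (hn : 2 ≤ n) (d x y : Fin n) :
    (cycleGraph n).dist (x + d) (y + d) = (cycleGraph n).dist x y := by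
  rw [cycle_dist hn, cycle_dist hn]
  have e1 : y + d - (x + d) = y - x := by ring
  have e2 : x + d - (y + d) = x - y := by ring
  rw [e1, e2]

/-- the "half point": u with u + u = s - 1 -/
noncomputable def hp (s : Fin n) : Fin n := (((n + 1) / 2 : ℕ) : Fin n) * (s - 1)

lemma hp_spec (hn : 2 ≤ n) (hodd : Odd n) (s : Fin n) : hp s + hp s = s - 1 := by
  unfold hp
  have h2 : ((2 * ((n + 1) / 2) : ℕ) : Fin n) = 1 := by
    have : 2 * ((n + 1) / 2) = n + 1 := by
      obtain ⟨k, rfl⟩ := hodd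
      omega
    rw [this]
    push_cast
    simp
  calc (((n + 1) / 2 : ℕ) : Fin n) * (s - 1) + (((n + 1) / 2 : ℕ) : Fin n) * (s - 1)
      = ((2 * ((n + 1) / 2) : ℕ) : Fin n) * (s - 1) := by push_cast; ring
    _ = s - 1 := by rw [h2]; ring

lemma hp_adj (hn : 2 ≤ n) (s : Fin n) :
    (cycleGraph n).Adj (hp s) (hp s + 1) := by
  rw [cycleGraph_adj']
  right
  rw [add_sub_cancel_left]
  exact one_val hn

lemma hp_reflect (hn : 2 ≤ n) (hodd : Odd n) (s : Fin n) :
    s - hp s = hp s + 1 := by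
  have h := hp_spec hn hodd s
  generalize hp s = u at h ⊢
  rw [sub_eq_iff_eq_add]
  calc s = (s - 1) + 1 := by ring
    _ = u + 1 + u := by rw [← h]; ring

lemma mrep_pair_eq (hn : 2 ≤ n) (hodd : Odd n) (s : Fin n) (X : Finset (Fin n))
    (hX : Multiset.map (fun w => s - w) X.val = X.val) :
    mrep (cycleGraph n) (hp s) X = mrep (cycleGraph n) (hp s + 1) X := by
  set u := hp s with hu
  set v := hp s + 1 with hv
  have hsv : s - v = u := by
    rw [hv, ← hp_reflect hn hodd s]; ring
  unfold mrep
  conv_rhs => rw [← hX]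
  rw [Multiset.map_map]
  apply Multiset.map_congr rfl
  intro w _
  show (cycleGraph n).dist u w = (cycleGraph n).dist v (s - w)
  calc (cycleGraph n).dist u w = (cycleGraph n).dist (s - v) w := by rw [hsv]
    _ = (cycleGraph n).dist (s - v) (s - (s - w)) := by rw [sub_sub_cancel]
    _ = (cycleGraph n).dist v (s - w) := dist_reflect hn s v (s - w)

lemma not_resolving_of_sym (hn : 2 ≤ n) (hodd : Odd n) {W : Finset (Fin n)} (s : Fin n)
    (hW : Multiset.map (fun w => s - w) W.val = W.val) :
    ¬ IsLocalMultisetResolving (cycleGraph n) W := fun hres =>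
  hres _ _ (hp_adj hn s) (mrep_pair_eq hn hodd s W hW)

lemma exists_sym_of_card_le_two (W : Finset (Fin n)) (h : W.card ≤ 2) :
    ∃ s, Multiset.map (fun w => s - w) W.val = W.val := by
  interval_cases hc : W.card
  · rw [Finset.card_eq_zero] at hc
    exact ⟨0, by simp [hc]⟩
  · rw [Finset.card_eq_one] at hc
    obtain ⟨a, rfl⟩ := hc
    exact ⟨a + a, by simp⟩
  · rw [Finset.card_eq_two] at hc
    obtain ⟨a, b, hab, rfl⟩ := hc
    refine ⟨a + b, ?_⟩
    rw [Finset.insert_val_of_notMem (by simp [hab])]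
    simp only [Multiset.map_cons, Finset.singleton_val, Multiset.map_singleton]
    rw [add_sub_cancel_right, add_sub_cancel_left]
    exact Multiset.cons_swap b a {}

lemma mrep_univ_const (hn : 2 ≤ n) (u v : Fin n) :
    mrep (cycleGraph n) u univ = mrep (cycleGraph n) v univ := by
  unfold mrep
  have he : (univ : Finset (Fin n)).val.map (fun w => w + (v - u)) = univ.val := by
    have h0 := congrArg Finset.val (Finset.map_univ_equiv (Equiv.addRight (v - u)))
    rw [Finset.map_val] at h0
    simpa only [Equiv.coe_toEmbedding, Equiv.coe_addRight] using h0
  conv_rhs => rw [← he, Multiset.map_map]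
  apply Multiset.map_congr rfl
  intro w _
  show (cycleGraph n).dist u w = (cycleGraph n).dist v (w + (v - u))
  have ht := dist_translate hn (v - u) u w
  rw [← ht]
  congr 1
  ring

lemma compl_val_add (W : Finset (Fin n)) : Wᶜ.val + W.val = (univ : Finset (Fin n)).val := by
  rw [Finset.compl_eq_univ_sdiff, Finset.sdiff_val]
  exact tsub_add_cancel_of_le (Finset.val_le_iff.mpr (Finset.subset_univ W))

lemma mrep_compl_transfer (hn : 2 ≤ n) (u v : Fin n) (W : Finset (Fin n))
    (h : mrep (cycleGraph n) u Wᶜ = mrep (cycleGraph n) v Wᶜ) :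
    mrep (cycleGraph n) u W = mrep (cycleGraph n) v W := by
  have h1 : mrep (cycleGraph n) u Wᶜ + mrep (cycleGraph n) u W
      = mrep (cycleGraph n) v Wᶜ + mrep (cycleGraph n) v W := by
    unfold mrep
    rw [← Multiset.map_add, ← Multiset.map_add, compl_val_add]
    exact mrep_univ_const hn u v
  rw [h] at h1
  exact add_left_cancel h1

end NZ2

lemma dmin_if (n m t a b w : ℕ) (hn : n = 2*m+1) (hm : 3 ≤ m) (ht : t < n) (hw3 : w ≤ 3)
    (hb : b + w = t ∨ b + w = t + n) (ha : a + t = w ∨ a + t = w + n)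
    (la : a < n) (lb : b < n) :
    min a b = if t ≤ w then w - t else if t ≤ m + w then t - w else n + w - t := by
  split_ifs <;> omega

set_option maxHeartbeats 1000000 in
lemma core_arith (n m t t' : ℕ) (hn : n = 2*m+1) (hm : 3 ≤ m) (ht : t < n) (ht'lt : t' < n)
    (ht' : t' = t + 1 ∨ t' + n = t + 1)
    (h : ((if t ≤ 0 then 0 - t else if t ≤ m + 0 then t - 0 else n + 0 - t) ::ₘ (if t ≤ 1 then 1 - t else if t ≤ m + 1 then t - 1 else n + 1 - t) ::ₘ {(if t ≤ 3 then 3 - t else if t ≤ m + 3 then t - 3 else n + 3 - t)} : Multiset ℕ)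
       = ((if t' ≤ 0 then 0 - t' else if t' ≤ m + 0 then t' - 0 else n + 0 - t') ::ₘ (if t' ≤ 1 then 1 - t' else if t' ≤ m + 1 then t' - 1 else n + 1 - t') ::ₘ {(if t' ≤ 3 then 3 - t' else if t' ≤ m + 3 then t' - 3 else n + 3 - t')})) : False := by
  rcases Nat.eq_or_lt_of_le hm with hm3 | hm4
  · -- m = 3, n = 7 : decide
    obtain rfl : m = 3 := hm3.symm
    subst hn
    interval_cases t' <;> interval_cases t <;>
      first
        | omega
        | exact absurd h (by decide)
  · have hm' : 4 ≤ m := hm4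
    have hcases : t = 0 ∨ t = 1 ∨ t = 2 ∨ t = 3 ∨ (4 ≤ t ∧ t + 1 ≤ m) ∨ t = m
        ∨ t = m + 1 ∨ t = m + 2 ∨ t = m + 3 ∨ (m + 4 ≤ t ∧ t + 1 ≤ 2*m) ∨ t = 2*m := by omega
    rcases hcases with hc | hc | hc | hc | hc | hc | hc | hc | hc | hc | hc
    · -- t = 0
      have h1 : t' = t + 1 := by omega
      rw [h1] at h
      rw [if_pos (show t ≤ 0 by omega),
          if_pos (show t ≤ 1 by omega),
          if_pos (show t ≤ 3 by omega),
          if_neg (show ¬ (t + 1) ≤ 0 by omega),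
          if_pos (show (t + 1) ≤ m + 0 by omega),
          if_pos (show (t + 1) ≤ 1 by omega),
          if_pos (show (t + 1) ≤ 3 by omega)] at h
      have hs := congrArg Multiset.sum h
      simp only [Multiset.sum_cons, Multiset.sum_singleton] at hs
      omega
    · -- t = 1
      have h1 : t' = t + 1 := by omega
      rw [h1] at h
      rw [if_neg (show ¬ t ≤ 0 by omega),
          if_pos (show t ≤ m + 0 by omega),
          if_pos (show t ≤ 1 by omega),
          if_pos (show t ≤ 3 by omega),
          if_neg (show ¬ (t + 1) ≤ 0 by omega),
          if_pos (show (t + 1) ≤ m + 0 by omega),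
          if_neg (show ¬ (t + 1) ≤ 1 by omega),
          if_pos (show (t + 1) ≤ m + 1 by omega),
          if_pos (show (t + 1) ≤ 3 by omega)] at h
      have hs := congrArg Multiset.sum h
      simp only [Multiset.sum_cons, Multiset.sum_singleton] at hs
      omega
    · -- t = 2
      have h1 : t' = t + 1 := by omega
      rw [h1] at h
      rw [if_neg (show ¬ t ≤ 0 by omega),
          if_pos (show t ≤ m + 0 by omega),
          if_neg (show ¬ t ≤ 1 by omega),
          if_pos (show t ≤ m + 1 by omega),
          if_pos (show t ≤ 3 by omega),
          if_neg (show ¬ (t + 1) ≤ 0 by omega),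
          if_pos (show (t + 1) ≤ m + 0 by omega),
          if_neg (show ¬ (t + 1) ≤ 1 by omega),
          if_pos (show (t + 1) ≤ m + 1 by omega),
          if_pos (show (t + 1) ≤ 3 by omega)] at h
      have hs := congrArg Multiset.sum h
      simp only [Multiset.sum_cons, Multiset.sum_singleton] at hs
      omega
    · -- t = 3
      have h1 : t' = t + 1 := by omega
      rw [h1] at h
      rw [if_neg (show ¬ t ≤ 0 by omega),
          if_pos (show t ≤ m + 0 by omega),
          if_neg (show ¬ t ≤ 1 by omega),
          if_pos (show t ≤ m + 1 by omega),
          if_pos (show t ≤ 3 by omega),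
          if_neg (show ¬ (t + 1) ≤ 0 by omega),
          if_pos (show (t + 1) ≤ m + 0 by omega),
          if_neg (show ¬ (t + 1) ≤ 1 by omega),
          if_pos (show (t + 1) ≤ m + 1 by omega),
          if_neg (show ¬ (t + 1) ≤ 3 by omega),
          if_pos (show (t + 1) ≤ m + 3 by omega)] at h
      have hs := congrArg Multiset.sum h
      simp only [Multiset.sum_cons, Multiset.sum_singleton] at hs
      omega
    · -- 4 <= t <= m-1
      have h1 : t' = t + 1 := by omega
      rw [h1] at h
      rw [if_neg (show ¬ t ≤ 0 by omega),
          if_pos (show t ≤ m + 0 by omega),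
          if_neg (show ¬ t ≤ 1 by omega),
          if_pos (show t ≤ m + 1 by omega),
          if_neg (show ¬ t ≤ 3 by omega),
          if_pos (show t ≤ m + 3 by omega),
          if_neg (show ¬ (t + 1) ≤ 0 by omega),
          if_pos (show (t + 1) ≤ m + 0 by omega),
          if_neg (show ¬ (t + 1) ≤ 1 by omega),
          if_pos (show (t + 1) ≤ m + 1 by omega),
          if_neg (show ¬ (t + 1) ≤ 3 by omega),
          if_pos (show (t + 1) ≤ m + 3 by omega)] at h
      have hs := congrArg Multiset.sum h
      simp only [Multiset.sum_cons, Multiset.sum_singleton] at hs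
      omega
    · -- t = m
      have h1 : t' = t + 1 := by omega
      rw [h1] at h
      rw [if_neg (show ¬ t ≤ 0 by omega),
          if_pos (show t ≤ m + 0 by omega),
          if_neg (show ¬ t ≤ 1 by omega),
          if_pos (show t ≤ m + 1 by omega),
          if_neg (show ¬ t ≤ 3 by omega),
          if_pos (show t ≤ m + 3 by omega),
          if_neg (show ¬ (t + 1) ≤ 0 by omega),
          if_neg (show ¬ (t + 1) ≤ m + 0 by omega),
          if_neg (show ¬ (t + 1) ≤ 1 by omega),
          if_pos (show (t + 1) ≤ m + 1 by omega),
          if_neg (show ¬ (t + 1) ≤ 3 by omega),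
          if_pos (show (t + 1) ≤ m + 3 by omega)] at h
      have hs := congrArg Multiset.sum h
      simp only [Multiset.sum_cons, Multiset.sum_singleton] at hs
      omega
    · -- special t = m+1
      have h1 : t' = m + 2 := by omega
      rw [h1] at h
      rw [if_neg (show ¬ t ≤ 0 by omega), if_neg (show ¬ t ≤ m + 0 by omega),
          if_neg (show ¬ t ≤ 1 by omega), if_pos (show t ≤ m + 1 by omega),
          if_neg (show ¬ t ≤ 3 by omega), if_pos (show t ≤ m + 3 by omega),
          if_neg (show ¬ (m+2) ≤ 0 by omega), if_neg (show ¬ (m+2) ≤ m + 0 by omega),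
          if_neg (show ¬ (m+2) ≤ 1 by omega), if_neg (show ¬ (m+2) ≤ m + 1 by omega),
          if_neg (show ¬ (m+2) ≤ 3 by omega), if_pos (show (m+2) ≤ m + 3 by omega)] at h
      have e1 : n + 0 - t = m := by omega
      have e2 : t - 1 = m := by omega
      have e3 : t - 3 = m - 2 := by omega
      have e4 : n + 0 - (m+2) = m - 1 := by omega
      have e5 : n + 1 - (m+2) = m := by omega
      have e6 : (m+2) - 3 = m - 1 := by omega
      rw [e1, e2, e3, e4, e5, e6] at h
      have hcnt := congrArg (Multiset.count m) h
      simp only [Multiset.count_cons, Multiset.count_singleton] at hcnt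
      split_ifs at hcnt <;> omega
    · -- t = m+2
      have h1 : t' = t + 1 := by omega
      rw [h1] at h
      rw [if_neg (show ¬ t ≤ 0 by omega),
          if_neg (show ¬ t ≤ m + 0 by omega),
          if_neg (show ¬ t ≤ 1 by omega),
          if_neg (show ¬ t ≤ m + 1 by omega),
          if_neg (show ¬ t ≤ 3 by omega),
          if_pos (show t ≤ m + 3 by omega),
          if_neg (show ¬ (t + 1) ≤ 0 by omega),
          if_neg (show ¬ (t + 1) ≤ m + 0 by omega),
          if_neg (show ¬ (t + 1) ≤ 1 by omega),
          if_neg (show ¬ (t + 1) ≤ m + 1 by omega),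
          if_neg (show ¬ (t + 1) ≤ 3 by omega),
          if_pos (show (t + 1) ≤ m + 3 by omega)] at h
      have hs := congrArg Multiset.sum h
      simp only [Multiset.sum_cons, Multiset.sum_singleton] at hs
      omega
    · -- t = m+3
      have h1 : t' = t + 1 := by omega
      rw [h1] at h
      rw [if_neg (show ¬ t ≤ 0 by omega),
          if_neg (show ¬ t ≤ m + 0 by omega),
          if_neg (show ¬ t ≤ 1 by omega),
          if_neg (show ¬ t ≤ m + 1 by omega),
          if_neg (show ¬ t ≤ 3 by omega),
          if_pos (show t ≤ m + 3 by omega),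
          if_neg (show ¬ (t + 1) ≤ 0 by omega),
          if_neg (show ¬ (t + 1) ≤ m + 0 by omega),
          if_neg (show ¬ (t + 1) ≤ 1 by omega),
          if_neg (show ¬ (t + 1) ≤ m + 1 by omega),
          if_neg (show ¬ (t + 1) ≤ 3 by omega),
          if_neg (show ¬ (t + 1) ≤ m + 3 by omega)] at h
      have hs := congrArg Multiset.sum h
      simp only [Multiset.sum_cons, Multiset.sum_singleton] at hs
      omega
    · -- m+4 <= t <= 2m-1
      have h1 : t' = t + 1 := by omega
      rw [h1] at h
      rw [if_neg (show ¬ t ≤ 0 by omega),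
          if_neg (show ¬ t ≤ m + 0 by omega),
          if_neg (show ¬ t ≤ 1 by omega),
          if_neg (show ¬ t ≤ m + 1 by omega),
          if_neg (show ¬ t ≤ 3 by omega),
          if_neg (show ¬ t ≤ m + 3 by omega),
          if_neg (show ¬ (t + 1) ≤ 0 by omega),
          if_neg (show ¬ (t + 1) ≤ m + 0 by omega),
          if_neg (show ¬ (t + 1) ≤ 1 by omega),
          if_neg (show ¬ (t + 1) ≤ m + 1 by omega),
          if_neg (show ¬ (t + 1) ≤ 3 by omega),
          if_neg (show ¬ (t + 1) ≤ m + 3 by omega)] at h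
      have hs := congrArg Multiset.sum h
      simp only [Multiset.sum_cons, Multiset.sum_singleton] at hs
      omega
    · -- t = 2m
      have h1 : t' = 0 := by omega
      rw [h1] at h
      rw [if_neg (show ¬ t ≤ 0 by omega),
          if_neg (show ¬ t ≤ m + 0 by omega),
          if_neg (show ¬ t ≤ 1 by omega),
          if_neg (show ¬ t ≤ m + 1 by omega),
          if_neg (show ¬ t ≤ 3 by omega),
          if_neg (show ¬ t ≤ m + 3 by omega),
          if_pos (show (0) ≤ 0 by omega),
          if_pos (show (0) ≤ 1 by omega),
          if_pos (show (0) ≤ 3 by omega)] at h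
      have hs := congrArg Multiset.sum h
      simp only [Multiset.sum_cons, Multiset.sum_singleton] at hs
      omega


section Main
variable [NeZero n]

/-- the resolving set {0,1,3} for n ≥ 7 -/
def W3 (hn : 7 ≤ n) : Finset (Fin n) :=
  {⟨0, by omega⟩, ⟨1, by omega⟩, ⟨3, by omega⟩}

lemma W3_val (hn : 7 ≤ n) :
    (W3 hn).val = (⟨0, by omega⟩ ::ₘ ⟨1, by omega⟩ ::ₘ {⟨3, by omega⟩} : Multiset (Fin n)) := by
  unfold W3
  rw [Finset.insert_val_of_notMem (by simp), Finset.insert_val_of_notMem (by simp)]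
  rfl

lemma W3_card (hn : 7 ≤ n) : (W3 hn).card = 3 := by
  rw [Finset.card_def, W3_val hn]
  rfl

lemma W3_ne (hn : 7 ≤ n) (hodd : Odd n) (u : Fin n) :
    mrep (cycleGraph n) u (W3 hn) ≠ mrep (cycleGraph n) (u + 1) (W3 hn) := by
  obtain ⟨m, hm⟩ := hodd
  have hm3 : 3 ≤ m := by omega
  intro h
  unfold mrep at h
  rw [W3_val hn] at h
  simp only [Multiset.map_cons, Multiset.map_singleton,
    cycle_dist (show 2 ≤ n by omega)] at h
  set w0 : Fin n := (⟨0, by omega⟩ : Fin n)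
  set w1 : Fin n := (⟨1, by omega⟩ : Fin n)
  set w3 : Fin n := (⟨3, by omega⟩ : Fin n)
  set v : Fin n := u + 1 with hvdef
  have e0 : w0.val = 0 := rfl
  have e1 : w1.val = 1 := rfl
  have e3 : w3.val = 3 := rfl
  have ha0 := fin_sub_val w0 u
  have hb0 := fin_sub_val u w0
  have ha1 := fin_sub_val w1 u
  have hb1 := fin_sub_val u w1
  have ha3 := fin_sub_val w3 u
  have hb3 := fin_sub_val u w3
  have hc0 := fin_sub_val w0 v
  have hd0 := fin_sub_val v w0
  have hc1 := fin_sub_val w1 v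
  have hd1 := fin_sub_val v w1
  have hc3 := fin_sub_val w3 v
  have hd3 := fin_sub_val v w3
  rw [e0] at ha0 hb0 hc0 hd0
  rw [e1] at ha1 hb1 hc1 hd1
  rw [e3] at ha3 hb3 hc3 hd3
  have E0 := dmin_if n m u.val ((w0 - u).val) ((u - w0).val) 0 hm hm3 u.isLt
    (Nat.zero_le 3) hb0 ha0 (w0 - u).isLt (u - w0).isLt
  have E1 := dmin_if n m u.val ((w1 - u).val) ((u - w1).val) 1 hm hm3 u.isLt
    (by norm_num) hb1 ha1 (w1 - u).isLt (u - w1).isLt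
  have E3 := dmin_if n m u.val ((w3 - u).val) ((u - w3).val) 3 hm hm3 u.isLt
    (Nat.le_refl 3) hb3 ha3 (w3 - u).isLt (u - w3).isLt
  have F0 := dmin_if n m v.val ((w0 - v).val) ((v - w0).val) 0 hm hm3 v.isLt
    (Nat.zero_le 3) hd0 hc0 (w0 - v).isLt (v - w0).isLt
  have F1 := dmin_if n m v.val ((w1 - v).val) ((v - w1).val) 1 hm hm3 v.isLt
    (by norm_num) hd1 hc1 (w1 - v).isLt (v - w1).isLt
  have F3 := dmin_if n m v.val ((w3 - v).val) ((v - w3).val) 3 hm hm3 v.isLt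
    (Nat.le_refl 3) hd3 hc3 (w3 - v).isLt (v - w3).isLt
  rw [E0, E1, E3, F0, F1, F3] at h
  have hvv := fin_add_val u 1
  rw [one_val (show 2 ≤ n by omega)] at hvv
  rw [← hvdef] at hvv
  exact core_arith n m u.val v.val hm hm3 u.isLt v.isLt hvv h

end Main

end StmtAux

open StmtAux Fin.NatCast Fin.CommRing in
/-- For odd `n ≥ 5`, no 2-element set of vertices of `C_n` is a local multiset resolving
set, hence `lmd(C_n) ≥ 3`; moreover `C_5` has no local multiset resolving set at all,
and `lmd(C_n) = 3` for odd `n ≥ 7`. -/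
theorem stmt_14 (n : ℕ) (hn : 5 ≤ n) (hodd : Odd n) :
    (∀ W : Finset (Fin n), W.card = 2 → ¬ IsLocalMultisetResolving (cycleGraph n) W) ∧
    (∀ W : Finset (Fin n), IsLocalMultisetResolving (cycleGraph n) W → 3 ≤ W.card) ∧
    (n = 5 → ∀ W : Finset (Fin n), ¬ IsLocalMultisetResolving (cycleGraph n) W) ∧
    (7 ≤ n → sInf {k : ℕ | ∃ W : Finset (Fin n),
        IsLocalMultisetResolving (cycleGraph n) W ∧ W.card = k} = 3) := by
  have hn2 : 2 ≤ n := by omega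
  have : NeZero n := ⟨by omega⟩
  have key2 : ∀ W : Finset (Fin n), W.card ≤ 2 → ¬ IsLocalMultisetResolving (cycleGraph n) W := by
    intro W hW
    obtain ⟨s, hs⟩ := exists_sym_of_card_le_two W hW
    exact not_resolving_of_sym hn2 hodd s hs
  refine ⟨fun W hW => key2 W (by omega), ?_, ?_, ?_⟩
  · intro W hW
    by_contra hlt
    exact key2 W (by omega) hW
  · rintro rfl W
    rcases le_or_gt W.card 2 with h2 | h2
    · exact key2 W h2
    · have hcc : Wᶜ.card ≤ 2 := by
        have := Finset.card_compl W
        have h5 : Fintype.card (Fin 5) = 5 := by simp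
        omega
      obtain ⟨s, hs⟩ := exists_sym_of_card_le_two Wᶜ hcc
      intro hres
      exact hres _ _ (hp_adj hn2 s)
        (mrep_compl_transfer hn2 _ _ W (mrep_pair_eq hn2 hodd s Wᶜ hs))
  · intro h7
    have hres : IsLocalMultisetResolving (cycleGraph n) (W3 h7) := by
      intro u v hadj
      rw [cycleGraph_adj'] at hadj
      rcases hadj with h1 | h1
      · have : u = v + 1 := by
          have huv : u - v = 1 := Fin.ext (by rw [one_val hn2]; exact h1)
          rw [← huv]; ring
        rw [this]
        exact (W3_ne h7 hodd v).symm
      · have : v = u + 1 := by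
          have huv : v - u = 1 := Fin.ext (by rw [one_val hn2]; exact h1)
          rw [← huv]; ring
        rw [this]
        exact W3_ne h7 hodd u
    have hmem : 3 ∈ {k : ℕ | ∃ W : Finset (Fin n),
        IsLocalMultisetResolving (cycleGraph n) W ∧ W.card = k} := ⟨W3 h7, hres, W3_card h7⟩
    refine le_antisymm (Nat.sInf_le hmem) (le_csInf ⟨3, hmem⟩ ?_)
    rintro b ⟨W, hW, rfl⟩
    by_contra hlt
    exact key2 W (by omega) hW
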